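/- arXiv:2602.19173 — 3 statements merged into one kernel-verified Lean document; each statement's English description precedes it below -/
import Mathlib

section
/- Covariance intersection upper bound for two blocks: if P₁, P₂ are positive definite n×n matrices, P₁₂ is any n×n matrix such that the joint matrix [[P₁, P₁₂],[P₁₂ᵀ, P₂]] is positive semidefinite, and ω₁, ω₂ > 0 with ω₁ + ω₂ = 1, then diag(P₁/ω₁, P₂/ω₂) − [[P₁, P₁₂],[P₁₂ᵀ, P₂]] is positive semidefinite. -/
/-!
Write `a = ω₂ / ω₁` and `b = ω₁ / ω₂`, so that `ab = 1` and `ω₁⁻¹ - 1 = a`, `ω₂⁻¹ - 1 = b`. The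
difference is then `[[a P₁, -P₁₂], [-P₁₂ᵀ, b P₂]]`, which is the congruence `S J Sᴴ` of the joint
matrix `J` by `S = diag(√a I, -√b I)`, and congruences preserve positive semidefiniteness.
-/

open Matrix

variable {ι κ : Type*} [Fintype ι] [Fintype κ] [DecidableEq ι] [DecidableEq κ]

theorem Matrix.fromBlocks_smul_one_mul_mul_conjTranspose (A : Matrix ι ι ℝ) (B : Matrix ι κ ℝ)
    (C : Matrix κ ι ℝ) (D : Matrix κ κ ℝ) (s t : ℝ) :
    fromBlocks (s • 1) 0 0 (t • 1) * fromBlocks A B C D * (fromBlocks (s • 1) 0 0 (t • 1))ᴴ =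
      fromBlocks ((s * s) • A) ((s * t) • B) ((t * s) • C) ((t * t) • D) := by
  simp [fromBlocks_transpose, fromBlocks_multiply, smul_smul, mul_comm]

theorem Matrix.PosSemidef.fromBlocks_smul_smul {A : Matrix ι ι ℝ} {B : Matrix ι κ ℝ}
    {C : Matrix κ ι ℝ} {D : Matrix κ κ ℝ} (h : (fromBlocks A B C D).PosSemidef) (s t : ℝ) :
    (fromBlocks ((s * s) • A) ((s * t) • B) ((t * s) • C) ((t * t) • D)).PosSemidef := by
  rw [← fromBlocks_smul_one_mul_mul_conjTranspose]
  exact h.mul_mul_conjTranspose_same _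

theorem Matrix.PosSemidef.fromBlocks_smul_neg {A : Matrix ι ι ℝ} {B : Matrix ι κ ℝ}
    {C : Matrix κ ι ℝ} {D : Matrix κ κ ℝ} (h : (fromBlocks A B C D).PosSemidef) {a b : ℝ}
    (ha : 0 ≤ a) (hb : 0 ≤ b) (hab : a * b = 1) :
    (fromBlocks (a • A) (-B) (-C) (b • D)).PosSemidef := by
  have hst : √a * -√b = -1 := by rw [mul_neg, ← Real.sqrt_mul ha, hab, Real.sqrt_one]
  simpa [hst, mul_comm (-√b), Real.mul_self_sqrt ha, Real.mul_self_sqrt hb]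
    using h.fromBlocks_smul_smul √a (-√b)

theorem covariance_intersection_two_blocks_general {n : ℕ}
    (P₁ P₂ P₁₂ : Matrix (Fin n) (Fin n) ℝ)
    (hJoint : (Matrix.fromBlocks P₁ P₁₂ P₁₂ᵀ P₂).PosSemidef)
    (ω₁ ω₂ : ℝ) (hω₁ : 0 < ω₁) (hω₂ : 0 < ω₂) (hsum : ω₁ + ω₂ = 1) :
    (Matrix.fromBlocks (ω₁⁻¹ • P₁) 0 0 (ω₂⁻¹ • P₂) -
      Matrix.fromBlocks P₁ P₁₂ P₁₂ᵀ P₂).PosSemidef := by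
  have h₁ : ω₁⁻¹ - 1 = ω₂ / ω₁ := by field_simp; linarith
  have h₂ : ω₂⁻¹ - 1 = ω₁ / ω₂ := by field_simp; linarith
  have hdiff : fromBlocks (ω₁⁻¹ • P₁) 0 0 (ω₂⁻¹ • P₂) - fromBlocks P₁ P₁₂ P₁₂ᵀ P₂ =
      fromBlocks ((ω₂ / ω₁) • P₁) (-P₁₂) (-P₁₂ᵀ) ((ω₁ / ω₂) • P₂) := by
    rw [sub_eq_add_neg, fromBlocks_neg, fromBlocks_add, ← h₁, ← h₂, sub_smul, sub_smul,
      one_smul, one_smul, zero_add, zero_add, sub_eq_add_neg, sub_eq_add_neg]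
  rw [hdiff]
  exact hJoint.fromBlocks_smul_neg (by positivity) (by positivity) (by field_simp)

/-- Covariance-intersection upper bound for two blocks: if `P₁, P₂` are
symmetric positive definite, the joint matrix `[[P₁, P₁₂],[P₁₂ᵀ, P₂]]` is
positive semidefinite, and `ω₁, ω₂ > 0` with `ω₁ + ω₂ = 1`, then
`diag(P₁/ω₁, P₂/ω₂) − [[P₁, P₁₂],[P₁₂ᵀ, P₂]]` is positive semidefinite. -/
theorem covariance_intersection_two_blocks {n : ℕ}
    (P₁ P₂ P₁₂ : Matrix (Fin n) (Fin n) ℝ)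
    (hP₁ : P₁.PosDef) (hP₂ : P₂.PosDef)
    (hJoint : (Matrix.fromBlocks P₁ P₁₂ P₁₂ᵀ P₂).PosSemidef)
    (ω₁ ω₂ : ℝ) (hω₁ : 0 < ω₁) (hω₂ : 0 < ω₂) (hsum : ω₁ + ω₂ = 1) :
    (Matrix.fromBlocks (ω₁⁻¹ • P₁) 0 0 (ω₂⁻¹ • P₂) -
      Matrix.fromBlocks P₁ P₁₂ P₁₂ᵀ P₂).PosSemidef :=
  covariance_intersection_two_blocks_general P₁ P₂ P₁₂ hJoint ω₁ ω₂ hω₁ hω₂ hsum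
end

section
/- The split covariance diag((1/ω₁)P₁, (1/ω₂)P₂) with ω₁+ω₂=1, ω₁,ω₂>0, never underestimates the true joint covariance: for any joint covariance C = [[P₁, P₁₂],[P₁₂ᵀ, P₂]] ⪰ 0 with these diagonal blocks, and any vector a, we have aᵀ diag(P₁/ω₁, P₂/ω₂) a ≥ aᵀ C a. -/
/-! Write `a = (u, v)`. Since `ω₁⁻¹ - 1 = ω₂ / ω₁` and `ω₂⁻¹ - 1 = ω₁ / ω₂`, the gap between the two
quadratic forms is `t uᵀP₁u - 2 uᵀP₁₂v + t⁻¹ vᵀP₂v` with `t = ω₂ / ω₁`, which is `t⁻¹` times the joint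
covariance evaluated at `(t u, -v)`, hence nonnegative. -/

open Matrix

namespace Matrix

variable {m n : Type*} [Fintype m] [Fintype n]

theorem sumElim_dotProduct_fromBlocks_mulVec_sumElim {R : Type*} [NonUnitalNonAssocSemiring R]
    (A : Matrix m m R) (B : Matrix m n R) (C : Matrix n m R) (D : Matrix n n R)
    (u : m → R) (v : n → R) :
    Sum.elim u v ⬝ᵥ (fromBlocks A B C D *ᵥ Sum.elim u v) =
      u ⬝ᵥ (A *ᵥ u) + u ⬝ᵥ (B *ᵥ v) + (v ⬝ᵥ (C *ᵥ u) + v ⬝ᵥ (D *ᵥ v)) := by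
  simp only [fromBlocks_mulVec, Sum.elim_comp_inl, Sum.elim_comp_inr,
    sumElim_dotProduct_sumElim, dotProduct_add]

theorem PosSemidef.two_mul_dotProduct_mulVec_le {A : Matrix m m ℝ} {B : Matrix m n ℝ}
    {D : Matrix n n ℝ} (h : (fromBlocks A B Bᵀ D).PosSemidef) {t : ℝ} (ht : 0 < t)
    (u : m → ℝ) (v : n → ℝ) :
    2 * (u ⬝ᵥ (B *ᵥ v)) ≤ t * (u ⬝ᵥ (A *ᵥ u)) + t⁻¹ * (v ⬝ᵥ (D *ᵥ v)) := by
  have hquad := h.dotProduct_mulVec_nonneg (Sum.elim (t • u) (-v))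
  rw [star_trivial, sumElim_dotProduct_fromBlocks_mulVec_sumElim, dotProduct_transpose_mulVec]
    at hquad
  simp only [mulVec_smul, mulVec_neg, smul_dotProduct, dotProduct_smul, neg_dotProduct,
    dotProduct_neg, neg_neg, smul_eq_mul] at hquad
  rw [← mul_le_mul_iff_of_pos_left ht, mul_add, ← mul_assoc, mul_inv_cancel_left₀ ht.ne']
  nlinarith

end Matrix

theorem split_covariance_upper_bound_general {n : ℕ}
    (P₁ P₂ P₁₂ : Matrix (Fin n) (Fin n) ℝ)
    (hC : (Matrix.fromBlocks P₁ P₁₂ P₁₂ᵀ P₂).PosSemidef)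
    (ω₁ ω₂ : ℝ) (hω₁ : 0 < ω₁) (hω₂ : 0 < ω₂) (hsum : ω₁ + ω₂ = 1)
    (a : Fin n ⊕ Fin n → ℝ) :
    a ⬝ᵥ (Matrix.fromBlocks (ω₁⁻¹ • P₁) 0 0 (ω₂⁻¹ • P₂) *ᵥ a) ≥
      a ⬝ᵥ (Matrix.fromBlocks P₁ P₁₂ P₁₂ᵀ P₂ *ᵥ a) := by
  obtain ⟨u, v, rfl⟩ : ∃ u v, a = Sum.elim u v :=
    ⟨a ∘ Sum.inl, a ∘ Sum.inr, (Sum.elim_comp_inl_inr a).symm⟩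
  have hcross := hC.two_mul_dotProduct_mulVec_le (div_pos hω₂ hω₁) u v
  have h₁ : ω₁⁻¹ = 1 + ω₂ / ω₁ := by field_simp; linarith
  have h₂ : ω₂⁻¹ = 1 + ω₁ / ω₂ := by field_simp; linarith
  rw [inv_div] at hcross
  rw [ge_iff_le, sumElim_dotProduct_fromBlocks_mulVec_sumElim,
    sumElim_dotProduct_fromBlocks_mulVec_sumElim, dotProduct_transpose_mulVec]
  simp only [smul_mulVec, dotProduct_smul, zero_mulVec, dotProduct_zero, smul_eq_mul, add_zero,
    zero_add, h₁, h₂]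
  linarith

/-- The split covariance `diag(P₁/ω₁, P₂/ω₂)` never underestimates the true
joint covariance: for any joint PSD covariance `C = [[P₁, P₁₂],[P₁₂ᵀ, P₂]]`
with these diagonal blocks and any vector `a`,
`aᵀ diag(P₁/ω₁, P₂/ω₂) a ≥ aᵀ C a`. -/
theorem split_covariance_upper_bound {n : ℕ}
    (P₁ P₂ P₁₂ : Matrix (Fin n) (Fin n) ℝ)
    (hP₁ : P₁.PosSemidef) (hP₂ : P₂.PosSemidef)
    (hC : (Matrix.fromBlocks P₁ P₁₂ P₁₂ᵀ P₂).PosSemidef)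
    (ω₁ ω₂ : ℝ) (hω₁ : 0 < ω₁) (hω₂ : 0 < ω₂) (hsum : ω₁ + ω₂ = 1)
    (a : Fin n ⊕ Fin n → ℝ) :
    a ⬝ᵥ (Matrix.fromBlocks (ω₁⁻¹ • P₁) 0 0 (ω₂⁻¹ • P₂) *ᵥ a) ≥
      a ⬝ᵥ (Matrix.fromBlocks P₁ P₁₂ P₁₂ᵀ P₂ *ᵥ a) :=
  split_covariance_upper_bound_general P₁ P₂ P₁₂ hC ω₁ ω₂ hω₁ hω₂ hsum a
end

section
/- The vector N₁ = (g, 0, 0, 0)ᵀ ∈ ℝ¹² lies in the kernel of the observability block H_u Φ, where H_u = H_pu [⌊(p_u − p_I)×⌋, 0₃, I₃, −I₃] is the right-invariant range-measurement Jacobian (with tag offset p_T = 0) and Φ = exp(F_A t) for the nilpotent F_A with blocks (2,1) = ⌊g×⌋, (3,2) = I₃; more precisely H_u N₁ = 0 and F_A N₁ has second component ⌊g×⌋g = 0, third and fourth components 0, so H_u Φ N₁ = 0 for all t ≥ 0. -/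
open Matrix

attribute [local instance] Matrix.linftyOpNormedRing Matrix.linftyOpNormedAlgebra

def skew (g : Fin 3 → ℝ) : Matrix (Fin 3) (Fin 3) ℝ :=
  !![0, -g 2, g 1; g 2, 0, -g 0; -g 1, g 0, 0]

/-- The 12×12 nilpotent propagation Jacobian `F_A` (blocks indexed by
`Fin 4 × Fin 3`): block (2,1) is `⌊g×⌋`, block (3,2) is `I₃`, others zero. -/
def FA (g : Fin 3 → ℝ) : Matrix (Fin 4 × Fin 3) (Fin 4 × Fin 3) ℝ :=
  Matrix.of fun p q =>
    if p.1 = 1 ∧ q.1 = 0 then skew g p.2 q.2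
    else if p.1 = 2 ∧ q.1 = 1 then (if p.2 = q.2 then 1 else 0)
    else 0

/-- The right-invariant range-measurement Jacobian (tag offset `p_T = 0`)
applied to the error vector `ξ = (ξ_θ, ξ_v, ξ_p, ξ_u)`:
`H_u ξ = H_pu (⌊(p_u − p_I)×⌋ ξ_θ + ξ_p − ξ_u)`, where the row vector
`H_pu = (p_I − p_u)ᵀ/‖p_I − p_u‖`. -/
noncomputable def Hu (pI pu : Fin 3 → ℝ) (ξ : Fin 4 × Fin 3 → ℝ) : ℝ :=
  ((Real.sqrt ((pI - pu) ⬝ᵥ (pI - pu)))⁻¹ • (pI - pu)) ⬝ᵥ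
    (skew (pu - pI) *ᵥ (fun i => ξ (0, i)) + (fun i => ξ (2, i)) - fun i => ξ (3, i))

namespace Matrix

variable {𝕂 n : Type*} [RCLike 𝕂] [Fintype n] [DecidableEq n]

theorem exp_mulVec_of_mulVec_eq_zero {M : Matrix n n 𝕂} {v : n → 𝕂} (h : M *ᵥ v = 0) :
    NormedSpace.exp M *ᵥ v = v := by
  have hterms : (fun k : ℕ => ((k.factorial : 𝕂)⁻¹ • M ^ k) *ᵥ v) = Pi.single 0 v := by
    ext1 k
    cases k with
    | zero => simp
    | succ k => rw [smul_mulVec, pow_succ, ← mulVec_mulVec, h, mulVec_zero, smul_zero,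
        Pi.single_eq_of_ne k.succ_ne_zero]
  have hsum : HasSum (fun k : ℕ => ((k.factorial : 𝕂)⁻¹ • M ^ k) *ᵥ v)
      (NormedSpace.exp M *ᵥ v) :=
    (NormedSpace.exp_series_hasSum_exp' (𝕂 := 𝕂) M).map (mulVec.addMonoidHomLeft v)
      (continuous_id.matrix_mulVec continuous_const)
  rw [hterms] at hsum
  exact hsum.unique (hasSum_pi_single 0 v)

end Matrix

theorem skew_mulVec (a v : Fin 3 → ℝ) : skew a *ᵥ v = a ⨯₃ v := by
  ext i
  fin_cases i <;> simp [skew, cross_apply, mulVec, dotProduct, Fin.sum_univ_three] <;> ring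

def attitudeError (θ : Fin 3 → ℝ) : Fin 4 × Fin 3 → ℝ := fun q => if q.1 = 0 then θ q.2 else 0

theorem FA_mulVec_attitudeError (g θ : Fin 3 → ℝ) :
    FA g *ᵥ attitudeError θ = fun q => if q.1 = 1 then (g ⨯₃ θ) q.2 else 0 := by
  ext ⟨i, j⟩
  rw [← skew_mulVec]
  fin_cases i <;> simp [FA, attitudeError, mulVec, dotProduct, Fintype.sum_prod_type]

/-- `H_pu` is parallel to `p_I − p_u`, which is orthogonal to `(p_u − p_I) × θ`. -/
theorem Hu_attitudeError (pI pu θ : Fin 3 → ℝ) : Hu pI pu (attitudeError θ) = 0 := by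
  have hcross : (pI - pu) ⬝ᵥ (pu - pI) ⨯₃ θ = 0 := by
    rw [← neg_sub pu pI, neg_dotProduct, dot_self_cross, neg_zero]
  have hvec : (skew (pu - pI) *ᵥ fun i => attitudeError θ (0, i)) +
      (fun i => attitudeError θ (2, i)) - (fun i => attitudeError θ (3, i)) = (pu - pI) ⨯₃ θ := by
    ext i
    simp [attitudeError, skew_mulVec]
  rw [Hu, hvec, smul_dotProduct, hcross, smul_zero]

theorem gravity_direction_unobservable_general (g pI pu : Fin 3 → ℝ)
    (N₁ : Fin 4 × Fin 3 → ℝ) (hN₁ : N₁ = fun q => if q.1 = 0 then g q.2 else 0) :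
    ∀ t : ℝ, 0 ≤ t → Hu pI pu (NormedSpace.exp (t • FA g) *ᵥ N₁) = 0 := by
  intro t _
  obtain rfl : N₁ = attitudeError g := hN₁
  have hker : (t • FA g) *ᵥ attitudeError g = 0 := by
    rw [smul_mulVec, FA_mulVec_attitudeError, cross_self]
    simp only [Pi.zero_apply, ite_self, ← Pi.zero_def, smul_zero]
  rw [Matrix.exp_mulVec_of_mulVec_eq_zero hker, Hu_attitudeError]

/-- The direction `N₁ = (g, 0, 0, 0)ᵀ ∈ ℝ¹²` lies in the kernel of the
observability block `H_u Φ` with `Φ = exp(F_A t)`: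
`H_u exp(F_A t) N₁ = 0` for all `t ≥ 0`. -/
theorem gravity_direction_unobservable (g pI pu : Fin 3 → ℝ) (hne : pI ≠ pu)
    (N₁ : Fin 4 × Fin 3 → ℝ) (hN₁ : N₁ = fun q => if q.1 = 0 then g q.2 else 0) :
    ∀ t : ℝ, 0 ≤ t → Hu pI pu (NormedSpace.exp (t • FA g) *ᵥ N₁) = 0 :=
  gravity_direction_unobservable_general g pI pu N₁ hN₁
end
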